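/- Let u : ℝⁿ → ℝ be a C² function on the closed ball B̄(0, 1/2) ⊂ ℝⁿ satisfying Δu = v (where Δu = Σᵢ ∂²u/∂xᵢ² is the Euclidean Laplacian). Then there is a constant C depending only on n such that |∇u(0)| ≤ C(‖u‖_{L^∞(B̄(0,1/2))} + ‖v‖_{L^∞(B̄(0,1/2))}). -/

import Mathlib

/-!
Fix a unit vector `e` and let `R` be the reflection in the hyperplane `e⊥`. On the half ball
`D = {‖x‖ < r, ⟪e, x⟫ > 0}` the function `w = u - u ∘ R` satisfies `|Δw| ≤ 2B`, vanishes on the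
flat part of `∂D` and is at most `2A` on the spherical part. The quadratic barrier
`Q x = (2A/r²)‖x‖² + κ ⟪e, x⟫ (r - ⟪e, x⟫)` with `κ = 2nA/r² + B`, `n = dim E`, has `ΔQ = -2B`
and dominates `w` on `∂D`, so the maximum principle gives `w ≤ Q` on `D`. As `w 0 = Q 0 = 0`,
differentiating in the direction `e` at `0` gives `2 ∂ₑu(0) ≤ ∂ₑQ(0) = κ r`; choosing `e` along
`∇u(0)` bounds the gradient.
-/

open Metric Set Filter Topology InnerProductSpace Laplacian
open scoped RealInnerProductSpace

theorem IsLocalMax.deriv_deriv_nonpos {f : ℝ → ℝ} {x₀ : ℝ} (h : IsLocalMax f x₀)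
    (hc : ContinuousAt f x₀) : deriv (deriv f) x₀ ≤ 0 := by
  by_contra! hpos
  -- `f'' x₀ > 0` would make `x₀` a local min too, so `f` would be constant near `x₀`
  have hmin := isLocalMin_of_deriv_deriv_pos hpos h.deriv_eq_zero hc
  have hconst : deriv f =ᶠ[𝓝 x₀] fun _ => 0 := by
    filter_upwards [(h.and hmin).eventually_nhds] with y hy
    have : f =ᶠ[𝓝 y] fun _ => f x₀ := by
      filter_upwards [hy] with z hz using le_antisymm hz.1 hz.2
    simpa using this.deriv_eq
  simp [hconst.deriv_eq] at hpos

theorem IsLocalMax.fderiv_fderiv_apply_self_nonpos {E : Type*} [NormedAddCommGroup E]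
    [NormedSpace ℝ E] {g : E → ℝ} {x₀ : E} (h : IsLocalMax g x₀) (hg : ContDiffAt ℝ 2 g x₀)
    (v : E) : fderiv ℝ (fun y => fderiv ℝ g y v) x₀ v ≤ 0 := by
  set L : ℝ → E := fun t => x₀ + t • v
  have hL : ∀ t, HasDerivAt L v t := fun t => by
    simpa [L] using ((hasDerivAt_id t).smul_const v).const_add x₀
  have hL0 : L 0 = x₀ := by simp [L]
  have hmax : IsLocalMax (g ∘ L) 0 := by
    rw [← hL0] at h
    exact h.comp_continuous (hL 0).continuousAt
  have hderiv : deriv (g ∘ L) =ᶠ[𝓝 0] (fun y => fderiv ℝ g y v) ∘ L := by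
    have : ∀ᶠ t in 𝓝 (0 : ℝ), ContDiffAt ℝ 2 g (L t) :=
      (hL 0).continuousAt.eventually (by rw [hL0]; exact hg.eventually (by simp))
    filter_upwards [this] with t ht
    exact ((ht.differentiableAt two_ne_zero).hasFDerivAt.comp_hasDerivAt t (hL t)).deriv
  have hg' : DifferentiableAt ℝ (fun y => fderiv ℝ g y v) (L 0) := by
    rw [hL0]
    exact ((hg.fderiv_right (m := 1) le_rfl).differentiableAt one_ne_zero).clm_apply
      (differentiableAt_const v)
  have := hmax.deriv_deriv_nonpos (hg.continuousAt.comp_of_eq (hL 0).continuousAt hL0)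
  rwa [hderiv.deriv_eq, (hg'.hasFDerivAt.comp_hasDerivAt 0 (hL 0)).deriv, hL0] at this

section Laplacian

variable {E F : Type*} [NormedAddCommGroup E] [InnerProductSpace ℝ E] [FiniteDimensional ℝ E]
  [NormedAddCommGroup F] [NormedSpace ℝ F]

theorem laplacian_eq_sum_fderiv_fderiv {f : E → F} {x : E}
    (hf : DifferentiableAt ℝ (fderiv ℝ f) x) {ι : Type*} [Fintype ι] (b : OrthonormalBasis ι ℝ E) :
    Δ f x = ∑ i, fderiv ℝ (fun y => fderiv ℝ f y (b i)) x (b i) := by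
  rw [laplacian_eq_iteratedFDeriv_orthonormalBasis f b]
  refine Finset.sum_congr rfl fun i _ => ?_
  rw [iteratedFDeriv_two_apply, fderiv_clm_apply hf (differentiableAt_const _)]
  simp

theorem IsLocalMax.laplacian_nonpos {g : E → ℝ} {x₀ : E} (h : IsLocalMax g x₀)
    (hg : ContDiffAt ℝ 2 g x₀) : Δ g x₀ ≤ 0 := by
  rw [laplacian_eq_sum_fderiv_fderiv
    ((hg.fderiv_right (m := 1) le_rfl).differentiableAt one_ne_zero) (stdOrthonormalBasis ℝ E)]
  exact Finset.sum_nonpos fun i _ => h.fderiv_fderiv_apply_self_nonpos hg _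

theorem laplacian_comp_linearIsometryEquiv (f : E → F) (R : E ≃ₗᵢ[ℝ] E) (x : E) :
    Δ (f ∘ R) x = Δ f (R x) := by
  have hR := R.toContinuousLinearEquiv.iteratedFDerivWithin_comp_right f uniqueDiffOn_univ
    (x := x) (mem_univ _) 2
  simp only [preimage_univ, iteratedFDerivWithin_univ] at hR
  set b := stdOrthonormalBasis ℝ E
  rw [laplacian_eq_iteratedFDeriv_orthonormalBasis f (b.map R),
    laplacian_eq_iteratedFDeriv_orthonormalBasis _ b]
  refine Finset.sum_congr rfl fun i _ => ?_
  rw [show f ∘ R = f ∘ R.toContinuousLinearEquiv from rfl, hR]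
  simp only [ContinuousMultilinearMap.compContinuousLinearMap_apply]
  congr 1
  ext j; fin_cases j <;> rfl

theorem ContinuousLinearMap.laplacian_eq_zero (ℓ : E →L[ℝ] F) (x : E) : Δ (⇑ℓ) x = 0 := by
  have h : fderiv ℝ ℓ = fun _ => ℓ := funext fun _ => ℓ.fderiv
  rw [laplacian_eq_sum_fderiv_fderiv (by rw [h]; fun_prop) (stdOrthonormalBasis ℝ E), h]
  simp

theorem laplacian_bilinear_diag (β : E →L[ℝ] E →L[ℝ] ℝ) (x : E) {ι : Type*} [Fintype ι]
    (b : OrthonormalBasis ι ℝ E) : Δ (fun y => β y y) x = 2 * ∑ i, β (b i) (b i) := by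
  have hβ : fderiv ℝ (fun y => β y y) = fun y => β y + β.flip y := by
    ext y v
    rw [show (fun y => β y y) = fun y => β (id y) (id y) from rfl,
      (β.hasFDerivAt_of_bilinear (hasFDerivAt_id y) (hasFDerivAt_id y)).fderiv]
    simp
  have hβ' : ∀ v, (fun y => fderiv ℝ (fun y => β y y) y v) = ⇑(β.flip v + β v) := by
    intro v; ext y; simp [hβ]
  rw [laplacian_eq_sum_fderiv_fderiv (by rw [hβ]; fun_prop) b, Finset.mul_sum]
  simp only [hβ', ContinuousLinearMap.fderiv]
  simp [two_mul]

theorem laplacian_norm_sq (x : E) : Δ (fun y : E => ‖y‖ ^ 2) x = 2 * Module.finrank ℝ E := by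
  have h : (fun y : E => ‖y‖ ^ 2) = fun y => innerSL ℝ y y := by
    ext y; exact (real_inner_self_eq_norm_sq y).symm
  rw [h, laplacian_bilinear_diag _ x (stdOrthonormalBasis ℝ E)]
  change 2 * ∑ i, ⟪stdOrthonormalBasis ℝ E i, stdOrthonormalBasis ℝ E i⟫ = _
  simp

theorem laplacian_inner_sq (e x : E) : Δ (fun y : E => ⟪e, y⟫ ^ 2) x = 2 * ‖e‖ ^ 2 := by
  have h : (fun y : E => ⟪e, y⟫ ^ 2) = fun y => (innerSL ℝ e).smulRight (innerSL ℝ e) y y := by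
    ext y; simp [sq]
  rw [h, laplacian_bilinear_diag _ x (stdOrthonormalBasis ℝ E)]
  change 2 * ∑ i, ⟪e, stdOrthonormalBasis ℝ E i⟫ * ⟪e, stdOrthonormalBasis ℝ E i⟫ = _
  simp_rw [← sq, (stdOrthonormalBasis ℝ E).sum_sq_inner_left]

theorem le_of_forall_frontier_le_of_laplacian_pos {D : Set E} (hDo : IsOpen D)
    (hDb : Bornology.IsBounded D) {g : E → ℝ} (hgc : ContinuousOn g (closure D))
    (hg : ∀ x ∈ D, ContDiffAt ℝ 2 g x) (hΔ : ∀ x ∈ D, 0 < Δ g x) {M : ℝ}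
    (hM : ∀ x ∈ frontier D, g x ≤ M) : ∀ x ∈ closure D, g x ≤ M := by
  rcases D.eq_empty_or_nonempty with rfl | hne
  · simp
  obtain ⟨x₀, hx₀, hmax⟩ := hDb.isCompact_closure.exists_isMaxOn hne.closure hgc
  by_cases hx₀D : x₀ ∈ D
  · have hloc : IsLocalMax g x₀ :=
      Filter.mem_of_superset (hDo.mem_nhds hx₀D) fun y hy => hmax (subset_closure hy)
    exact absurd (hloc.laplacian_nonpos (hg x₀ hx₀D)) (hΔ x₀ hx₀D).not_ge
  · have hx₀F : x₀ ∈ frontier D := by rw [hDo.frontier_eq]; exact ⟨hx₀, hx₀D⟩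
    exact fun x hx => (hmax hx).trans (hM x₀ hx₀F)

theorem le_of_forall_frontier_le_of_laplacian_nonneg [Nontrivial E] {D : Set E} (hDo : IsOpen D)
    (hDb : Bornology.IsBounded D) {g : E → ℝ} (hgc : ContinuousOn g (closure D))
    (hg : ∀ x ∈ D, ContDiffAt ℝ 2 g x) (hΔ : ∀ x ∈ D, 0 ≤ Δ g x) {M : ℝ}
    (hM : ∀ x ∈ frontier D, g x ≤ M) : ∀ x ∈ closure D, g x ≤ M := by
  obtain ⟨ρ, hρ, hDρ⟩ := hDb.closure.subset_closedBall_lt 0 0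
  have hnorm : ∀ x ∈ closure D, ‖x‖ ^ 2 ≤ ρ ^ 2 := fun x hx => by
    have := mem_closedBall_zero_iff.mp (hDρ hx)
    gcongr
  have hN : ContDiff ℝ 2 fun y : E => ‖y‖ ^ 2 := contDiff_norm_sq ℝ
  intro x hx
  refine le_of_forall_pos_le_add fun δ hδ => ?_
  -- perturb `g` by `c ‖y‖²` to make its Laplacian positive
  set c := δ / ρ ^ 2
  have hc : 0 < c := by positivity
  have hpert := le_of_forall_frontier_le_of_laplacian_pos hDo hDb (M := M + δ)
    (g := g + c • fun y => ‖y‖ ^ 2) (hgc.add (hN.continuous.continuousOn.const_smul c))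
    (fun y hy => (hg y hy).add (hN.contDiffAt.const_smul c))
    (fun y hy => by
      rw [(hg y hy).laplacian_add (f₂ := c • fun y => ‖y‖ ^ 2) (hN.contDiffAt.const_smul c),
        laplacian_smul _ hN.contDiffAt,
        laplacian_norm_sq, smul_eq_mul]
      have : (0 : ℝ) < Module.finrank ℝ E := by exact_mod_cast Module.finrank_pos
      nlinarith [hΔ y hy])
    (fun y hy => by
      have := hnorm y (frontier_subset_closure hy)
      have : c * ‖y‖ ^ 2 ≤ δ := by
        calc c * ‖y‖ ^ 2 ≤ c * ρ ^ 2 := by gcongr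
          _ = δ := div_mul_cancel₀ _ (by positivity)
      simp only [Pi.add_apply, Pi.smul_apply, smul_eq_mul]
      linarith [hM y hy])
    x hx
  simp only [Pi.add_apply, Pi.smul_apply, smul_eq_mul] at hpert
  nlinarith [sq_nonneg ‖x‖]

end Laplacian

section HalfBall

variable {E : Type*} [NormedAddCommGroup E] [InnerProductSpace ℝ E]

def halfBall (e : E) (r : ℝ) : Set E := ball 0 r ∩ {y | 0 < ⟪e, y⟫}

theorem isOpen_halfBall (e : E) (r : ℝ) : IsOpen (halfBall e r) :=
  isOpen_ball.inter (isOpen_lt continuous_const (innerSL ℝ e).continuous)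

theorem closure_halfBall_subset (e : E) (r : ℝ) :
    closure (halfBall e r) ⊆ closedBall 0 r ∩ {y | 0 ≤ ⟪e, y⟫} :=
  (closure_inter_subset_inter_closure _ _).trans <|
    inter_subset_inter closure_ball_subset_closedBall
      (closure_lt_subset_le continuous_const (innerSL ℝ e).continuous)

theorem inner_eq_zero_or_norm_eq_of_mem_frontier_halfBall {e y : E} {r : ℝ}
    (hy : y ∈ frontier (halfBall e r)) : ⟪e, y⟫ = 0 ∨ ‖y‖ = r := by
  rw [(isOpen_halfBall e r).frontier_eq] at hy
  obtain ⟨hyr, hey : 0 ≤ ⟪e, y⟫⟩ := closure_halfBall_subset e r hy.1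
  refine hey.eq_or_lt.imp Eq.symm fun hey => (mem_closedBall_zero_iff.mp hyr).antisymm ?_
  exact not_lt.mp fun h => hy.2 ⟨mem_ball_zero_iff.mpr h, hey⟩

theorem reflection_orthogonal_singleton_eq_self {e x : E} (h : ⟪e, x⟫ = 0) :
    (ℝ ∙ e)ᗮ.reflection x = x :=
  Submodule.reflection_mem_subspace_eq_self
    (Submodule.mem_orthogonal_singleton_iff_inner_right.mpr h)

end HalfBall

section Barrier

variable {E : Type*} [NormedAddCommGroup E] [InnerProductSpace ℝ E]

noncomputable def halfBallBarrier (e : E) (r a κ : ℝ) (y : E) : ℝ :=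
  a * ‖y‖ ^ 2 + κ * ⟪e, y⟫ * (r - ⟪e, y⟫)

theorem contDiff_halfBallBarrier (e : E) (r a κ : ℝ) : ContDiff ℝ 2 (halfBallBarrier e r a κ) := by
  have hN : ContDiff ℝ 2 fun y : E => ‖y‖ ^ 2 := contDiff_norm_sq ℝ
  have hL : ContDiff ℝ 2 fun y : E => ⟪e, y⟫ := (innerSL ℝ e).contDiff
  unfold halfBallBarrier; fun_prop

theorem laplacian_halfBallBarrier [FiniteDimensional ℝ E] {e : E} (he : ‖e‖ = 1) (r a κ : ℝ)
    (x : E) :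
    Δ (halfBallBarrier e r a κ) x = 2 * Module.finrank ℝ E * a - 2 * κ := by
  have h : halfBallBarrier e r a κ =
      a • (fun y : E => ‖y‖ ^ 2) + (κ * r) • ⇑(innerSL ℝ e) - κ • fun y => ⟪e, y⟫ ^ 2 := by
    ext y
    simp only [halfBallBarrier, coe_innerSL_apply, Pi.sub_apply, Pi.add_apply, Pi.smul_apply,
      smul_eq_mul]
    ring
  have hN : ContDiffAt ℝ 2 (fun y : E => ‖y‖ ^ 2) x := (contDiff_norm_sq ℝ).contDiffAt
  have hL : ContDiffAt ℝ 2 (innerSL ℝ e) x := (innerSL ℝ e).contDiff.contDiffAt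
  have hS : ContDiffAt ℝ 2 (fun y : E => ⟪e, y⟫ ^ 2) x :=
    ((innerSL ℝ e).contDiff.pow 2).contDiffAt
  have hNL : ContDiffAt ℝ 2 (a • (fun y : E => ‖y‖ ^ 2) + (κ * r) • ⇑(innerSL ℝ e)) x :=
    (hN.const_smul a).add (hL.const_smul (κ * r))
  rw [h, hNL.laplacian_sub (f₂ := κ • fun y => ⟪e, y⟫ ^ 2) (hS.const_smul κ),
    ContDiffAt.laplacian_add (f₁ := a • fun y : E => ‖y‖ ^ 2) (f₂ := (κ * r) • ⇑(innerSL ℝ e))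
      (hN.const_smul a) (hL.const_smul (κ * r)),
    laplacian_smul _ hN, laplacian_smul _ hL, laplacian_smul _ hS, laplacian_norm_sq,
    laplacian_inner_sq, ContinuousLinearMap.laplacian_eq_zero, he]
  simp only [smul_eq_mul, mul_zero, add_zero, one_pow, mul_one]
  ring

theorem hasFDerivAt_halfBallBarrier_zero (e : E) (r a κ : ℝ) :
    HasFDerivAt (halfBallBarrier e r a κ) ((κ * r) • innerSL ℝ e) 0 := by
  have h := (((hasStrictFDerivAt_norm_sq (0 : E)).hasFDerivAt.const_mul a).fun_add
    (((innerSL ℝ e).hasFDerivAt.const_mul κ).fun_mul ((innerSL ℝ e).hasFDerivAt.const_sub r)))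
  refine h.congr_fderiv ?_
  ext v
  simp only [map_zero, smul_zero, coe_innerSL_apply, mul_zero,
    smul_neg, zero_smul, neg_zero, sub_zero, zero_add, smul_apply, smul_eq_mul]
  ring

theorem mul_norm_sq_le_halfBallBarrier {e : E} (he : ‖e‖ = 1) {r a κ : ℝ} (hκ : 0 ≤ κ) {y : E}
    (hy : ‖y‖ ≤ r) (hey : 0 ≤ ⟪e, y⟫) : a * ‖y‖ ^ 2 ≤ halfBallBarrier e r a κ y := by
  have : ⟪e, y⟫ ≤ r := (real_inner_le_norm e y).trans (by rw [he, one_mul]; exact hy)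
  unfold halfBallBarrier
  nlinarith [mul_nonneg hκ hey]

theorem sub_reflection_le_halfBallBarrier_of_mem_frontier {u : E → ℝ} {r A κ : ℝ} (hr : 0 < r)
    (hA : ∀ x ∈ closedBall (0 : E) r, |u x| ≤ A) {e : E} (he : ‖e‖ = 1) (hκ : 0 ≤ κ) {y : E}
    (hy : y ∈ frontier (halfBall e r)) :
    u y - u ((ℝ ∙ e)ᗮ.reflection y) ≤ halfBallBarrier e r (2 * A / r ^ 2) κ y := by
  have hA0 : 0 ≤ A := (abs_nonneg _).trans (hA 0 (mem_closedBall_self hr.le))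
  obtain ⟨hyr, hey : 0 ≤ ⟪e, y⟫⟩ := closure_halfBall_subset e r (frontier_subset_closure hy)
  have hQ := mul_norm_sq_le_halfBallBarrier he (a := 2 * A / r ^ 2) hκ
    (mem_closedBall_zero_iff.mp hyr) hey
  rcases inner_eq_zero_or_norm_eq_of_mem_frontier_halfBall hy with hey0 | hyr'
  · rw [reflection_orthogonal_singleton_eq_self hey0]
    have : 0 ≤ 2 * A / r ^ 2 * ‖y‖ ^ 2 := by positivity
    linarith
  · rw [hyr', div_mul_cancel₀ _ (by positivity)] at hQ
    have := abs_le.mp (hA y hyr)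
    have := abs_le.mp (hA ((ℝ ∙ e)ᗮ.reflection y) (by simpa using hyr))
    linarith

end Barrier

section GradientEstimate

variable {E : Type*} [NormedAddCommGroup E] [InnerProductSpace ℝ E] [FiniteDimensional ℝ E]

theorem sub_reflection_le_halfBallBarrier {u : E → ℝ} {r A B : ℝ}
    (hu : ContDiffOn ℝ 2 u (ball 0 r)) (huc : ContinuousOn u (closedBall 0 r))
    (hA : ∀ x ∈ closedBall (0 : E) r, |u x| ≤ A) (hB : ∀ x ∈ ball (0 : E) r, |Δ u x| ≤ B)
    {e : E} (he : ‖e‖ = 1) {y : E} (hy : y ∈ halfBall e r) :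
    u y - u ((ℝ ∙ e)ᗮ.reflection y) ≤
      halfBallBarrier e r (2 * A / r ^ 2) (2 * Module.finrank ℝ E * A / r ^ 2 + B) y := by
  have : Nontrivial E := ⟨e, 0, ne_zero_of_norm_ne_zero (by simp [he])⟩
  have hr : 0 < r := (norm_nonneg y).trans_lt (mem_ball_zero_iff.mp hy.1)
  have hA0 : 0 ≤ A := (abs_nonneg _).trans (hA 0 (mem_closedBall_self hr.le))
  have hB0 : 0 ≤ B := (abs_nonneg _).trans (hB 0 (mem_ball_self hr))
  set R := (ℝ ∙ e)ᗮ.reflection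
  set κ := 2 * Module.finrank ℝ E * A / r ^ 2 + B
  set Q := halfBallBarrier e r (2 * A / r ^ 2) κ
  have hRball : ∀ z ∈ ball (0 : E) r, R z ∈ ball 0 r := fun z hz => by simpa [R] using hz
  have hu' : ∀ z ∈ ball (0 : E) r, ContDiffAt ℝ 2 u z := fun z hz =>
    hu.contDiffAt (isOpen_ball.mem_nhds hz)
  have huR : ∀ z ∈ ball (0 : E) r, ContDiffAt ℝ 2 (u ∘ R) z := fun z hz =>
    (hu' (R z) (hRball z hz)).comp z R.contDiff.contDiffAt
  suffices ∀ z ∈ closure (halfBall e r), (u - u ∘ R - Q) z ≤ 0 by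
    simpa [sub_nonpos] using this y (subset_closure hy)
  refine le_of_forall_frontier_le_of_laplacian_nonneg (isOpen_halfBall e r)
    (isBounded_ball.subset inter_subset_left) ?_ ?_ ?_ fun z hz => ?_
  · refine ((huc.sub (huc.comp R.continuous.continuousOn fun z hz => ?_)).sub
      (contDiff_halfBallBarrier e r _ κ).continuous.continuousOn).mono
      ((closure_halfBall_subset e r).trans inter_subset_left)
    simpa [R] using hz
  · exact fun z hz => ((hu' z hz.1).sub (huR z hz.1)).sub
      (contDiff_halfBallBarrier e r _ κ).contDiffAt
  · intro z hz
    rw [ContDiffAt.laplacian_sub (f₁ := u - u ∘ R) ((hu' z hz.1).sub (huR z hz.1))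
        (contDiff_halfBallBarrier e r _ κ).contDiffAt,
      (hu' z hz.1).laplacian_sub (huR z hz.1), laplacian_comp_linearIsometryEquiv,
      laplacian_halfBallBarrier he]
    have hκ : 2 * Module.finrank ℝ E * (2 * A / r ^ 2) - 2 * κ = -2 * B := by
      simp only [κ]; ring
    have := abs_le.mp (hB z hz.1)
    have := abs_le.mp (hB (R z) (hRball z hz.1))
    linarith
  · exact sub_nonpos.mpr
      (sub_reflection_le_halfBallBarrier_of_mem_frontier hr hA he (by positivity) hz)

theorem fderiv_apply_le_of_abs_le_of_abs_laplacian_le {u : E → ℝ} {r A B : ℝ} (hr : 0 < r)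
    (hu : ContDiffOn ℝ 2 u (ball 0 r)) (huc : ContinuousOn u (closedBall 0 r))
    (hA : ∀ x ∈ closedBall (0 : E) r, |u x| ≤ A) (hB : ∀ x ∈ ball (0 : E) r, |Δ u x| ≤ B)
    {e : E} (he : ‖e‖ = 1) :
    fderiv ℝ u 0 e ≤ Module.finrank ℝ E * A / r + B * r / 2 := by
  set R := (ℝ ∙ e)ᗮ.reflection
  set κ := 2 * Module.finrank ℝ E * A / r ^ 2 + B
  set g := u - u ∘ R - halfBallBarrier e r (2 * A / r ^ 2) κ
  have hmax : IsMaxOn g (halfBall e r) 0 := fun y hy => by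
    have hg0 : g 0 = 0 := by simp [g, halfBallBarrier]
    show g y ≤ g 0
    exact hg0 ▸ sub_nonpos.mpr (sub_reflection_le_halfBallBarrier hu huc hA hB he hy)
  have hcone : ∀ᶠ t in 𝓝[>] (0 : ℝ), (0 : E) + t • e ∈ halfBall e r := by
    filter_upwards [Ioo_mem_nhdsGT hr] with t ht
    refine ⟨?_, ?_⟩
    · simp [norm_smul, he, abs_of_pos ht.1, ht.2]
    · simp [inner_smul_right, he, ht.1]
  have hu0 : HasFDerivAt u (fderiv ℝ u 0) (R 0) := by
    rw [map_zero]
    exact ((hu.contDiffAt (isOpen_ball.mem_nhds (mem_ball_self hr))).differentiableAt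
      two_ne_zero).hasFDerivAt
  have hg0 : HasFDerivAt g
      (fderiv ℝ u 0 - (fderiv ℝ u 0).comp (R : E →L[ℝ] E) - (κ * r) • innerSL ℝ e) 0 :=
    ((map_zero R ▸ hu0).sub (hu0.comp 0 (R : E →L[ℝ] E).hasFDerivAt)).sub
      (hasFDerivAt_halfBallBarrier_zero e r _ κ)
  have := hmax.localize.hasFDerivWithinAt_nonpos hg0.hasFDerivWithinAt
    (mem_posTangentConeAt_of_frequently_mem hcone.frequently)
  simp only [sub_apply, ContinuousLinearMap.comp_apply,
    ContinuousLinearEquiv.coe_coe, LinearIsometryEquiv.coe_toContinuousLinearEquiv, R,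
    Submodule.reflection_orthogonalComplement_singleton_eq_neg, map_neg, sub_neg_eq_add,
    smul_apply, coe_innerSL_apply, real_inner_self_eq_norm_sq, he, one_pow,
    smul_eq_mul, mul_one, sub_nonpos] at this
  have hκr : κ * r = 2 * (Module.finrank ℝ E * A / r + B * r / 2) := by simp only [κ]; field_simp
  linarith

end GradientEstimate

theorem norm_gradient_le_of_forall_fderiv_apply_le {E : Type*} [NormedAddCommGroup E]
    [InnerProductSpace ℝ E] [CompleteSpace E] {f : E → ℝ} {x : E} {M : ℝ} (hM : 0 ≤ M)
    (h : ∀ e : E, ‖e‖ = 1 → fderiv ℝ f x e ≤ M) : ‖gradient f x‖ ≤ M := by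
  rcases eq_or_ne (gradient f x) 0 with h0 | h0
  · simpa [h0]
  have := h (‖gradient f x‖⁻¹ • gradient f x) (norm_smul_inv_norm h0)
  rwa [← toDual_gradient, toDual_apply_apply, inner_smul_right, real_inner_self_eq_norm_sq,
    sq, inv_mul_cancel_left₀ (norm_ne_zero_iff.mpr h0)] at this

open EuclideanSpace in
/-- Interior gradient estimate on the unit-scale ball: if `Δu = v` on
`B̄(0, 1/2)`, then `|∇u(0)| ≤ C(‖u‖_∞ + ‖v‖_∞)` with `C = C(n)`. -/
theorem interior_gradient_estimate (n : ℕ) :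
    ∃ C > 0, ∀ (u v : EuclideanSpace ℝ (Fin n) → ℝ) (A B : ℝ),
      ContDiffOn ℝ 2 u (closedBall 0 (1/2)) →
      (∀ x ∈ closedBall (0 : EuclideanSpace ℝ (Fin n)) (1/2),
        (∑ i, fderiv ℝ (fun y => fderiv ℝ u y (single i 1)) x (single i 1)) = v x) →
      (∀ x ∈ closedBall (0 : EuclideanSpace ℝ (Fin n)) (1/2), |u x| ≤ A) →
      (∀ x ∈ closedBall (0 : EuclideanSpace ℝ (Fin n)) (1/2), |v x| ≤ B) →
      ‖gradient u 0‖ ≤ C * (A + B) := by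
  refine ⟨2 * n + 1, by positivity, fun u v A B hu hlap hA hB => ?_⟩
  have hA0 : 0 ≤ A := (abs_nonneg _).trans (hA 0 (mem_closedBall_self (by norm_num)))
  have hB0 : 0 ≤ B := (abs_nonneg _).trans (hB 0 (mem_closedBall_self (by norm_num)))
  have hu' := hu.mono ball_subset_closedBall
  have hΔ : ∀ x ∈ ball (0 : EuclideanSpace ℝ (Fin n)) (1/2), |Δ u x| ≤ B := by
    intro x hx
    have hux := (hu'.contDiffAt (isOpen_ball.mem_nhds hx)).fderiv_right (m := 1) le_rfl
    rw [laplacian_eq_sum_fderiv_fderiv (hux.differentiableAt one_ne_zero) (basisFun (Fin n) ℝ)]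
    simpa only [basisFun_apply, hlap x (ball_subset_closedBall hx)]
      using hB x (ball_subset_closedBall hx)
  have hgrad := norm_gradient_le_of_forall_fderiv_apply_le (by positivity) fun e he =>
    fderiv_apply_le_of_abs_le_of_abs_laplacian_le (by norm_num) hu' hu.continuousOn hA hΔ he
  simp only [finrank_euclideanSpace_fin] at hgrad
  nlinarith
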